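/- Let p > 2 and let (δ_k) and (a_k) be the bubble sequences. Then lim_{k→∞} δ_k = 0 and Σ_{i=0}^{∞} a_i = ∞ (the series of a_i diverges). -/

import Mathlib

open Filter

/-- The bubble sequences `(a_k)`, `(δ_k)` for `p > 2`. -/
def IsBubbleSeq (p : ℝ) (a δ : ℕ → ℝ) : Prop :=
  a 0 = 2 ∧ δ 0 = 1 ∧
  ∀ k : ℕ,
    δ (k + 1) ∈ Set.Ioo 0 (δ k) ∧
    2 * p / (2 + a k) * (1 - δ (k + 1) / δ k) - 1 + (δ (k + 1) / δ k) ^ p = 0 ∧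
    a (k + 1) = 2 - (δ (k + 1) / δ k) ^ (p - 1) * (2 + a k) ∧
    a (k + 1) ∈ Set.Ioo (0:ℝ) 2

private lemma bern {q x : ℝ} (hq : 1 ≤ q) (hx : 0 ≤ x) : 1 + q * (x - 1) ≤ x ^ q := by
  have h := one_add_mul_self_le_rpow_one_add (s := x - 1) (by linarith) hq
  have e : (1 : ℝ) + (x - 1) = x := by ring
  rwa [e] at h

private lemma F2 {q x : ℝ} (hq : 1 ≤ q) (hx : 0 < x) : q * (1 - x) * x ^ (q - 1) ≤ 1 - x ^ q := by
  have hxq : (0:ℝ) < x ^ q := Real.rpow_pos_of_pos hx q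
  have h := bern hq (le_of_lt (inv_pos.mpr hx))
  rw [Real.inv_rpow hx.le] at h
  have h2 : (1 + q * (x⁻¹ - 1)) * x ^ q ≤ 1 := by
    calc (1 + q * (x⁻¹ - 1)) * x ^ q ≤ (x ^ q)⁻¹ * x ^ q :=
          mul_le_mul_of_nonneg_right h hxq.le
      _ = 1 := inv_mul_cancel₀ (ne_of_gt hxq)
  have h3 : x ^ (q - 1) = x ^ q / x := by rw [Real.rpow_sub hx, Real.rpow_one]
  have h4 : (1 + q * (x⁻¹ - 1)) * x ^ q = x ^ q + q * (1 - x) * (x ^ q / x) := by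
    field_simp
  rw [h3]; nlinarith [h2, h4]

private lemma quad {p : ℝ} (hp : 2 ≤ p) {t : ℝ} (ht0 : 0 ≤ t) (ht1 : t ≤ 1) :
    (1 - t) ^ p ≤ 1 - p * t + p * (p - 1) / 2 * t ^ 2 := by
  have hp0 : (0:ℝ) ≤ p := by linarith
  set g : ℝ → ℝ := fun s => 1 - p * s + p * (p - 1) / 2 * s ^ 2 - (1 - s) ^ p with hg
  have hder : ∀ s ∈ Set.Ioo (0:ℝ) 1,
      HasDerivAt g (-p + p * (p - 1) * s + p * (1 - s) ^ (p - 1)) s := by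
    intro s hs
    have hs1 : (1:ℝ) - s ≠ 0 := by have := hs.2; intro h; linarith [sub_eq_zero.mp h]
    have h1 : HasDerivAt (fun s : ℝ => 1 - s) (-1) s := by
      simpa using (hasDerivAt_id s).const_sub 1
    have h2 : HasDerivAt (fun s : ℝ => (1 - s) ^ p) ((-1) * p * (1 - s) ^ (p - 1)) s :=
      h1.rpow_const (Or.inl hs1)
    have h3 : HasDerivAt (fun s : ℝ => 1 - p * s + p * (p - 1) / 2 * s ^ 2)
        (-p + p * (p - 1) / 2 * (2 * s)) s := by
      have ha : HasDerivAt (fun s : ℝ => p * s) p s := by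
        simpa using (hasDerivAt_id s).const_mul p
      have hb : HasDerivAt (fun s : ℝ => s ^ 2) (2 * s) s := by
        simpa using hasDerivAt_pow 2 s
      have := ((hasDerivAt_const s (1:ℝ)).sub ha).add (hb.const_mul (p * (p - 1) / 2))
      rw [zero_sub] at this
      exact this
    have := h3.sub h2
    rw [show -p + p * (p - 1) * s + p * (1 - s) ^ (p - 1)
        = -p + p * (p - 1) / 2 * (2 * s) - -1 * p * (1 - s) ^ (p - 1) by ring]
    exact this
  have hmono : MonotoneOn g (Set.Icc (0:ℝ) 1) := by
    apply monotoneOn_of_deriv_nonneg (convex_Icc 0 1)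
    · apply ContinuousOn.sub
      · fun_prop
      · exact ContinuousOn.rpow_const (by fun_prop) (fun x _ => Or.inr hp0)
    · rw [interior_Icc]
      intro s hs
      exact (hder s hs).differentiableAt.differentiableWithinAt
    · rw [interior_Icc]
      intro s hs
      rw [(hder s hs).deriv]
      have hb := bern (q := p - 1) (by linarith) (x := 1 - s) (by linarith [hs.2])
      nlinarith [hs.1, hs.2, hb]
  have h0 : g 0 = 0 := by simp [hg]
  have := hmono (Set.mem_Icc.mpr ⟨le_refl 0, zero_le_one⟩) (Set.mem_Icc.mpr ⟨ht0, ht1⟩) ht0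
  rw [h0] at this
  simp only [hg] at this
  linarith

private lemma step_ineqs {p aa r : ℝ} (hp : 2 < p) (ha : 0 < aa) (ha2 : aa ≤ 2)
    (hr0 : 0 < r) (hr1 : r < 1)
    (heq : 2 * p / (2 + aa) * (1 - r) - 1 + r ^ p = 0) :
    aa / (p - 1) ≤ 2 - r ^ (p - 1) * (2 + aa) ∧
      aa - (3 * p - 3) * aa ^ 2 ≤ 2 - r ^ (p - 1) * (2 + aa) := by
  have h2a : (0:ℝ) < 2 + aa := by linarith
  have hp0 : (0:ℝ) < p := by linarith
  have hε : (0:ℝ) < 1 - r := by linarith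
  have heq' : 2 * p * (1 - r) = (2 + aa) * (1 - r ^ p) := by
    have e1 : 2 * p / (2 + aa) * (1 - r) = 1 - r ^ p := by linarith
    have e2 : (2 + aa) * (2 * p / (2 + aa) * (1 - r)) = 2 * p * (1 - r) := by
      field_simp
    rw [e1] at e2
    linarith
  have hB0 : (0:ℝ) < r ^ (p - 1) := Real.rpow_pos_of_pos hr0 _
  have hD0 : (0:ℝ) < r ^ (p - 2) := Real.rpow_pos_of_pos hr0 _
  have hX0 : (0:ℝ) < r ^ p := Real.rpow_pos_of_pos hr0 _
  have hB1 : r ^ (p - 1) ≤ 1 := Real.rpow_le_one hr0.le hr1.le (by linarith)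
  have hD1 : r ^ (p - 2) ≤ 1 := Real.rpow_le_one hr0.le hr1.le (by linarith)
  -- product identities
  have hrB : r * r ^ (p - 1) = r ^ p := by
    have h := Real.rpow_add hr0 1 (p - 1)
    rw [Real.rpow_one] at h
    have e : 1 + (p - 1) = p := by ring
    rw [e] at h
    exact h.symm
  have hrD : r * r ^ (p - 2) = r ^ (p - 1) := by
    have h := Real.rpow_add hr0 1 (p - 2)
    rw [Real.rpow_one] at h
    have e : 1 + (p - 2) = p - 1 := by ring
    rw [e] at h
    exact h.symm
  have hBD : r ^ (p - 1) * r ^ (p - 2) = r ^ (2 * p - 3) := by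
    have h := Real.rpow_add hr0 (p - 1) (p - 2)
    have e : p - 1 + (p - 2) = 2 * p - 3 := by ring
    rw [e] at h
    exact h.symm
  -- tangent estimates
  have hF2p : p * (1 - r) * r ^ (p - 1) ≤ 1 - r ^ p := F2 (by linarith) hr0
  have hF2q : (p - 1) * (1 - r) * r ^ (p - 2) ≤ 1 - r ^ (p - 1) := by
    have h := F2 (q := p - 1) (by linarith) hr0
    rw [show p - 1 - 1 = p - 2 by ring] at h
    exact h
  -- Bernoulli upper bounds
  have hBp : 1 - r ^ p ≤ p * (1 - r) := by
    have := bern (q := p) (by linarith) hr0.le; linarith [this]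
  have h7 : 1 - r ^ (2 * p - 3) ≤ (2 * p - 3) * (1 - r) := by
    have := bern (q := 2 * p - 3) (by linarith) hr0.le; linarith [this]
  have h8 : 1 - r ^ (p - 2) ≤ p * (1 - r) := by
    rcases le_or_gt (p - 2) 1 with hc | hc
    · have h := Real.rpow_le_rpow_of_exponent_ge hr0 hr1.le hc
      rw [Real.rpow_one] at h
      nlinarith [h, mul_nonneg (show (0:ℝ) ≤ p - 1 by linarith) (show (0:ℝ) ≤ 1 - r by linarith)]
    · have := bern (q := p - 2) hc.le hr0.le; linarith [this]
  -- sharp second-order bounds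
  have hquad' : p * (1 - r) - p * (p - 1) / 2 * (1 - r) ^ 2 ≤ 1 - r ^ p := by
    have hq := quad hp.le (t := 1 - r) hε.le (by linarith)
    rw [show (1:ℝ) - (1 - r) = r by ring] at hq
    linarith [hq]
  have hsq : 1 - r ^ p ≤ p * (1 - r) - p / 2 * (1 - r) ^ 2 := by
    have h1 : r * r = r ^ (2:ℝ) := by
      rw [show (2:ℝ) = ((2:ℕ):ℝ) by norm_num, Real.rpow_natCast]; ring
    have hrr : (r * r) ^ (p / 2) = r ^ p := by
      rw [h1, ← Real.rpow_mul hr0.le, show (2:ℝ) * (p / 2) = p by ring]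
    have hb := bern (q := p / 2) (by linarith) (x := r * r) (by positivity)
    rw [hrr] at hb
    nlinarith [hb, sq_nonneg (1-r)]
  -- constraint in product form
  have key : aa * (1 - r ^ p) = 2 * p * (1 - r) - 2 * (1 - r ^ p) := by
    linear_combination (-1 : ℝ) * heq'
  -- (v) : aa * r^(p-1) ≤ (p-1)*(1-r)
  have hv : aa * r ^ (p - 1) ≤ (p - 1) * (1 - r) := by
    have hv1 : aa * (p * (1 - r) * r ^ (p - 1)) ≤ aa * (1 - r ^ p) :=
      mul_le_mul_of_nonneg_left hF2p ha.le
    have hv2 : aa * (1 - r ^ p) ≤ p * (p - 1) * (1 - r) ^ 2 := by linarith [key, hquad']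
    have hv3 : aa * r ^ (p - 1) * (p * (1 - r)) ≤ ((p - 1) * (1 - r)) * (p * (1 - r)) := by
      linarith [hv1, hv2]
    exact le_of_mul_le_mul_right hv3 (by positivity)
  -- (vi) : 1 - r ≤ aa
  have hεa : 1 - r ≤ aa := by
    have h1 : p * (1 - r) ^ 2 ≤ aa * (1 - r ^ p) := by linarith [key, hsq]
    have h2 : aa * (1 - r ^ p) ≤ aa * (p * (1 - r)) := mul_le_mul_of_nonneg_left hBp ha.le
    have h3 : (1 - r) * (p * (1 - r)) ≤ aa * (p * (1 - r)) := by linarith [h1, h2]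
    exact le_of_mul_le_mul_right h3 (by positivity)
  -- (L1)
  have hXB : r * (1 - r ^ (p - 1)) = r - r ^ p := by rw [mul_sub, hrB, mul_one]
  have hL1b : (1 - r) + (p - 1) * (1 - r) * r ^ (p - 1) ≤ 1 - r ^ p := by
    have h := mul_le_mul_of_nonneg_left hF2q hr0.le
    have e : r * ((p - 1) * (1 - r) * r ^ (p - 2)) = (p - 1) * (1 - r) * (r * r ^ (p - 2)) := by
      ring
    rw [e, hrD] at h
    linarith [hXB, h]
  have hL1c : (2 + aa) * ((1 - r) + (p - 1) * (1 - r) * r ^ (p - 1)) ≤ 2 * p * (1 - r) := by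
    rw [heq']
    exact mul_le_mul_of_nonneg_left hL1b h2a.le
  have hL1d : ((2 + aa) * (1 + (p - 1) * r ^ (p - 1))) * (1 - r) ≤ (2 * p) * (1 - r) := by
    linarith [hL1c]
  have hL1e : (2 + aa) * (1 + (p - 1) * r ^ (p - 1)) ≤ 2 * p :=
    le_of_mul_le_mul_right hL1d hε
  constructor
  · rw [div_le_iff₀ (by linarith : (0:ℝ) < p - 1)]
    nlinarith [hL1e]
  · -- (L2)
    have s2 : aa * r ^ (p - 1) * r ^ (p - 2) ≤ (p - 1) * (1 - r) * r ^ (p - 2) :=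
      mul_le_mul_of_nonneg_right hv hD0.le
    have s3 : aa * r ^ (p - 1) * r ^ (p - 2) = aa * r ^ (2 * p - 3) := by
      rw [mul_assoc, hBD]
    have s4 : r ^ (p - 1) - r ^ (2 * p - 3) ≤ 1 - r ^ (p - 2) := by
      have prod : 0 ≤ (1 - r ^ (p - 1)) * (1 - r ^ (p - 2)) :=
        mul_nonneg (by linarith) (by linarith)
      linarith [hBD, prod]
    have s5 : 1 + r ^ (p - 1) - 2 * r ^ (2 * p - 3) ≤ (3 * p - 3) * (1 - r) := by
      linarith [h7, s4, h8]
    have f1 := mul_le_mul_of_nonneg_left s5 ha.le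
    have f5 : 0 ≤ (3 * p - 3) * aa * (aa - (1 - r)) :=
      mul_nonneg (mul_nonneg (show (0:ℝ) ≤ 3 * p - 3 by linarith) ha.le)
        (sub_nonneg.mpr hεa)
    linarith [f1, hF2q, s2, s3, f5]

private lemma harmonic_step {C c N : ℝ} (hC : 0 < C) (hc : 0 < c) (hCc : C * c ≤ 1 / 4)
    (hN : 0 ≤ N) : c / (N + 2) ≤ c / (N + 1) - C * (c / (N + 1)) ^ 2 := by
  have h1 : (0:ℝ) < N + 1 := by linarith
  have h2 : (0:ℝ) < N + 2 := by linarith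
  rw [← sub_nonneg]
  have expand : c / (N + 1) - C * (c / (N + 1)) ^ 2 - c / (N + 2)
      = (c * (N + 1) - C * c ^ 2 * (N + 2)) / ((N + 1) ^ 2 * (N + 2)) := by
    field_simp
    ring
  rw [expand]
  apply div_nonneg _ (by positivity)
  have h3 : C * c ^ 2 * (N + 2) ≤ (1 / 4) * c * (N + 2) := by
    nlinarith [mul_le_mul_of_nonneg_right hCc (show (0:ℝ) ≤ c * (N + 2) by positivity)]
  nlinarith [h3, hc]

private lemma exp_key {x : ℝ} (hx0 : 0 ≤ x) (hx2 : x ≤ 2) :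
    (2 - x) / (2 + x) ≤ Real.exp (-(x / 2)) := by
  have h2x : (0:ℝ) < 2 + x := by linarith
  rw [div_le_iff₀ h2x]
  have hb := Real.add_one_le_exp (-(x / 2))
  nlinarith [hb, Real.exp_pos (-(x / 2))]

/-- Lemma 4.11 of the paper. For `p > 2`, `δ_k → 0` and
`∑_{i=0}^∞ a_i = ∞` (the partial sums diverge to infinity). -/
theorem statement11 (p : ℝ) (hp : 2 < p) (a δ : ℕ → ℝ) (hb : IsBubbleSeq p a δ) :
    Tendsto δ atTop (nhds 0) ∧
    Tendsto (fun n => ∑ i ∈ Finset.range n, a i) atTop atTop := by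
  obtain ⟨ha0, hδ0, hk⟩ := hb
  have hδpos : ∀ k, 0 < δ k := by
    intro k
    induction k with
    | zero => rw [hδ0]; norm_num
    | succ n _ => exact (hk n).1.1
  have hδlt : ∀ k, δ (k + 1) < δ k := fun k => (hk k).1.2
  have haIoo : ∀ k, 0 < a k ∧ a k ≤ 2 := by
    intro k
    cases k with
    | zero => rw [ha0]; norm_num
    | succ n => exact ⟨(hk n).2.2.2.1, (hk n).2.2.2.2.le⟩
  have hstep : ∀ k, a k / (p - 1) ≤ a (k + 1) ∧ a k - (3 * p - 3) * (a k) ^ 2 ≤ a (k + 1) := by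
    intro k
    have h := step_ineqs hp (haIoo k).1 (haIoo k).2
      (div_pos (hδpos (k + 1)) (hδpos k)) ((div_lt_one (hδpos k)).mpr (hδlt k)) (hk k).2.1
    rw [(hk k).2.2.1]
    exact h
  obtain ⟨C, hC⟩ : ∃ C : ℝ, C = 3 * p - 3 := ⟨_, rfl⟩
  rw [← hC] at hstep
  have hC3 : (3:ℝ) ≤ C := by rw [hC]; linarith
  have hC0 : (0:ℝ) < C := by linarith
  have hp1 : (1:ℝ) ≤ p - 1 := by linarith
  obtain ⟨c, hc⟩ : ∃ c : ℝ, c = 1 / (4 * C * (p - 1)) := ⟨_, rfl⟩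
  have hcpos : 0 < c := by rw [hc]; positivity
  have hCc : C * c ≤ 1 / 4 := by
    rw [hc, show C * (1 / (4 * C * (p - 1))) = 1 / (4 * (p - 1)) by field_simp,
      div_le_div_iff₀ (by linarith) (by norm_num)]
    linarith
  have hcsmall : c ≤ 1 / 12 := by
    rw [hc, div_le_div_iff₀ (by positivity) (by norm_num)]
    nlinarith
  have hlow : ∀ k : ℕ, c / (k + 1) ≤ a k := by
    intro k
    induction k with
    | zero =>
      rw [ha0]
      norm_num
      linarith [hcsmall]
    | succ n ih =>
      have hN : (0:ℝ) ≤ (n:ℝ) := Nat.cast_nonneg n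
      push_cast
      push_cast at ih
      rcases le_or_gt (a n) (1 / (2 * C)) with hcase | hcase
      · have h1 := (hstep n).2
        have hmon : c / ((n:ℝ) + 1) - C * (c / ((n:ℝ) + 1)) ^ 2 ≤ a n - C * (a n) ^ 2 := by
          have hx0 : 0 ≤ c / ((n:ℝ) + 1) := by positivity
          have hy : C * a n ≤ 1 / 2 := by
            have h := mul_le_mul_of_nonneg_left hcase hC0.le
            rw [show C * (1 / (2 * C)) = 1 / 2 by field_simp] at h
            exact h
          have hx : C * (c / ((n:ℝ) + 1)) ≤ 1 / 2 := by
            have h := mul_le_mul_of_nonneg_left ih hC0.le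
            linarith [h, hy]
          have hprod : 0 ≤ (a n - c / ((n:ℝ) + 1)) * (1 - C * (c / ((n:ℝ) + 1)) - C * a n) := by
            apply mul_nonneg (by linarith [ih]) (by linarith [hx, hy])
          nlinarith [hprod]
        have ht := harmonic_step hC0 hcpos hCc hN
        rw [show (n:ℝ) + 1 + 1 = (n:ℝ) + 2 by ring]
        linarith [h1, hmon, ht]
      · have h1 := (hstep n).1
        have h2 : 1 / (2 * C) / (p - 1) ≤ a n / (p - 1) := by
          have h := mul_le_mul_of_nonneg_right hcase.le
            (inv_nonneg.mpr (by linarith : (0:ℝ) ≤ p - 1))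
          simpa [div_eq_mul_inv] using h
        have e2 : 1 / (2 * C) / (p - 1) = 2 * c := by
          rw [hc]; field_simp; ring
        have h3 : c / ((n:ℝ) + 1 + 1) ≤ c := by
          rw [div_le_iff₀ (by positivity)]
          nlinarith [mul_nonneg hcpos.le (show (0:ℝ) ≤ (n:ℝ) + 1 by linarith)]
        rw [e2] at h2
        linarith [h1, h2, h3, hcpos]
  -- divergence of the series
  have hdiv : Tendsto (fun n => ∑ i ∈ Finset.range n, a i) atTop atTop := by
    apply tendsto_atTop_mono _
      (Real.tendsto_sum_range_one_div_nat_succ_atTop.const_mul_atTop hcpos)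
    intro n
    rw [Finset.mul_sum]
    apply Finset.sum_le_sum
    intro i _
    rw [mul_one_div]
    exact hlow i
  refine ⟨?_, hdiv⟩
  -- δ → 0
  obtain ⟨S, hS⟩ : ∃ S : ℕ → ℝ, S = fun n => ∑ i ∈ Finset.range n, a i := ⟨_, rfl⟩
  have hdivS : Tendsto S atTop atTop := by rw [hS]; exact hdiv
  have hS1 : S 1 = 2 := by
    rw [hS]
    simp [Finset.sum_range_one, ha0]
  have hSsucc : ∀ n, S (n + 1) = S n + a n := by rw [hS]; exact fun n => Finset.sum_range_succ _ _
  have hfrac : ∀ k, (δ (k + 1) / δ k) ^ (p - 1) = (2 - a (k + 1)) / (2 + a k) := by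
    intro k
    have h2a : (0:ℝ) < 2 + a k := by linarith [(haIoo k).1]
    rw [eq_div_iff (ne_of_gt h2a)]
    linarith [(hk k).2.2.1]
  have hrpow : ∀ k, (δ (k + 1)) ^ (p - 1) = (2 - a (k + 1)) / (2 + a k) * (δ k) ^ (p - 1) := by
    intro k
    have hd : δ (k + 1) = δ (k + 1) / δ k * δ k :=
      (div_mul_cancel₀ _ (ne_of_gt (hδpos k))).symm
    calc (δ (k + 1)) ^ (p - 1) = (δ (k + 1) / δ k * δ k) ^ (p - 1) := by rw [← hd]
      _ = (δ (k + 1) / δ k) ^ (p - 1) * (δ k) ^ (p - 1) :=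
          Real.mul_rpow (le_of_lt (div_pos (hδpos (k + 1)) (hδpos k))) (hδpos k).le
      _ = (2 - a (k + 1)) / (2 + a k) * (δ k) ^ (p - 1) := by rw [hfrac k]
  have claim : ∀ n, (δ (n + 1)) ^ (p - 1) ≤ (2 - a (n + 1)) * Real.exp (-(S (n + 1)) / 2) := by
    intro n
    induction n with
    | zero =>
      rw [hrpow 0, hδ0, Real.one_rpow, mul_one, ha0, hS1]
      have ha1 : a 1 < 2 := (hk 0).2.2.2.2
      have hexp : (1:ℝ) / 4 ≤ Real.exp (-(2:ℝ) / 2) := by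
        rw [show -(2:ℝ) / 2 = -1 by norm_num, Real.exp_neg]
        have h4 : Real.exp 1 ≤ 4 := by
          have := Real.exp_one_lt_d9
          linarith
        have hinv := mul_inv_cancel₀ (ne_of_gt (Real.exp_pos 1))
        nlinarith [hinv, h4, inv_pos.mpr (Real.exp_pos 1)]
      have h2a1 : 0 ≤ 2 - a 1 := by linarith
      calc (2 - a 1) / (2 + 2) = (2 - a 1) * (1 / 4) := by ring
        _ ≤ (2 - a 1) * Real.exp (-(2:ℝ) / 2) := mul_le_mul_of_nonneg_left hexp h2a1
    | succ n ih =>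
      have h2an : (0:ℝ) < 2 + a (n + 1) := by linarith [(haIoo (n + 1)).1]
      have ha2' : a (n + 2) < 2 := (hk (n + 1)).2.2.2.2
      have hnn : (0:ℝ) ≤ (2 - a (n + 2)) / (2 + a (n + 1)) := by
        apply div_nonneg (by linarith) h2an.le
      calc (δ (n + 2)) ^ (p - 1)
          = (2 - a (n + 2)) / (2 + a (n + 1)) * (δ (n + 1)) ^ (p - 1) := hrpow (n + 1)
        _ ≤ (2 - a (n + 2)) / (2 + a (n + 1)) * ((2 - a (n + 1)) * Real.exp (-(S (n + 1)) / 2)) :=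
            mul_le_mul_of_nonneg_left ih hnn
        _ = (2 - a (n + 2)) * ((2 - a (n + 1)) / (2 + a (n + 1))) * Real.exp (-(S (n + 1)) / 2) := by
            ring
        _ ≤ (2 - a (n + 2)) * Real.exp (-(a (n + 1) / 2)) * Real.exp (-(S (n + 1)) / 2) := by
            apply mul_le_mul_of_nonneg_right _ (Real.exp_pos _).le
            exact mul_le_mul_of_nonneg_left
              (exp_key (haIoo (n + 1)).1.le (haIoo (n + 1)).2) (by linarith)
        _ = (2 - a (n + 2)) * Real.exp (-(S (n + 2)) / 2) := by
            rw [mul_assoc, ← Real.exp_add, hSsucc (n + 1)]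
            ring_nf
  -- conclude δ → 0
  have hppos : (0:ℝ) < p - 1 := by linarith
  have hδle : ∀ n, δ (n + 1) ≤ 2 ^ (p - 1)⁻¹ * Real.exp (-(S (n + 1)) / (2 * (p - 1))) := by
    intro n
    have h1 : (δ (n + 1)) ^ (p - 1) ≤ 2 * Real.exp (-(S (n + 1)) / 2) := by
      have := claim n
      have ha1 : 0 < a (n + 1) := (haIoo (n + 1)).1
      nlinarith [this, Real.exp_pos (-(S (n + 1)) / 2)]
    have h2 : δ (n + 1) = ((δ (n + 1)) ^ (p - 1)) ^ (p - 1)⁻¹ :=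
      (Real.rpow_rpow_inv (hδpos (n + 1)).le (ne_of_gt hppos)).symm
    rw [h2]
    calc ((δ (n + 1)) ^ (p - 1)) ^ (p - 1)⁻¹
        ≤ (2 * Real.exp (-(S (n + 1)) / 2)) ^ (p - 1)⁻¹ :=
          Real.rpow_le_rpow (Real.rpow_nonneg (hδpos (n + 1)).le _) h1 (by positivity)
      _ = 2 ^ (p - 1)⁻¹ * (Real.exp (-(S (n + 1)) / 2)) ^ (p - 1)⁻¹ :=
          Real.mul_rpow (by norm_num) (Real.exp_pos _).le
      _ = 2 ^ (p - 1)⁻¹ * Real.exp (-(S (n + 1)) / (2 * (p - 1))) := by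
          rw [Real.rpow_def_of_pos (Real.exp_pos _), Real.log_exp]
          congr 1
          field_simp
  have hStop : Tendsto (fun n => S (n + 1)) atTop atTop :=
    (tendsto_add_atTop_iff_nat 1).mpr hdivS
  have hbot : Tendsto (fun n => -(S (n + 1)) / (2 * (p - 1))) atTop atBot := by
    have h := hStop.const_mul_atTop_of_neg (show -(1 / (2 * (p - 1))) < 0 by
      have : (0:ℝ) < 1 / (2 * (p - 1)) := by positivity
      linarith)
    exact h.congr fun n => by ring
  have hexp0 : Tendsto (fun n => 2 ^ (p - 1)⁻¹ * Real.exp (-(S (n + 1)) / (2 * (p - 1))))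
      atTop (nhds 0) := by
    have h := Real.tendsto_exp_atBot.comp hbot
    have := h.const_mul (2 ^ (p - 1)⁻¹ : ℝ)
    simpa using this
  have hδ1 : Tendsto (fun n => δ (n + 1)) atTop (nhds 0) :=
    squeeze_zero (fun n => (hδpos (n + 1)).le) hδle hexp0
  exact (tendsto_add_atTop_iff_nat 1).mp hδ1
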